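/- arXiv:2601.20153 — 2 statements merged into one kernel-verified Lean document; each statement's English description precedes it below -/
import Mathlib

section
/- For every finite simple graph G without isolated vertices and without open twins, G has an OTD-code and the OTD-number of G is at most the O-number of G plus one, i.e., γ^OTD(G) ≤ γ^O(G) + 1. -/
/-!
Without open twins the whole vertex set is an O-set, so O-sets exist. Take a minimum O-set `C`.
Since the traces `N(v) ∩ C` are pairwise distinct, at most one vertex `v₀` has an empty trace;
adding one neighbour of `v₀` (which exists as `v₀` is not isolated) to `C` gives a total-dominating
set, and enlarging an O-set keeps it an O-set.
-/

open Finset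

namespace SepDom

variable {V : Type*} [Fintype V] [DecidableEq V]

/-- The closed neighborhood `N[v]` of a vertex as a `Finset`. -/
def closedNbhd (G : SimpleGraph V) [DecidableRel G.Adj] (v : V) : Finset V :=
  insert v (G.neighborFinset v)

/-- `C` is a dominating set: `N[v] ∩ C ≠ ∅` for all `v`. -/
def IsDomSet (G : SimpleGraph V) [DecidableRel G.Adj] (C : Finset V) : Prop :=
  ∀ v : V, (closedNbhd G v ∩ C).Nonempty

/-- `C` is a total-dominating set: `N(v) ∩ C ≠ ∅` for all `v`. -/
def IsTotalDomSet (G : SimpleGraph V) [DecidableRel G.Adj] (C : Finset V) : Prop :=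
  ∀ v : V, (G.neighborFinset v ∩ C).Nonempty

/-- `C` is a locating set (L-set): the sets `N(v) ∩ C`, `v ∉ C`, are pairwise distinct. -/
def IsLSet (G : SimpleGraph V) [DecidableRel G.Adj] (C : Finset V) : Prop :=
  ∀ u ∉ C, ∀ v ∉ C, G.neighborFinset u ∩ C = G.neighborFinset v ∩ C → u = v

/-- `C` is an open-separating set (O-set): the sets `N(v) ∩ C` are pairwise distinct. -/
def IsOSet (G : SimpleGraph V) [DecidableRel G.Adj] (C : Finset V) : Prop :=
  ∀ u v : V, G.neighborFinset u ∩ C = G.neighborFinset v ∩ C → u = v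

/-- `C` is a closed-separating set (I-set): the sets `N[v] ∩ C` are pairwise distinct. -/
def IsISet (G : SimpleGraph V) [DecidableRel G.Adj] (C : Finset V) : Prop :=
  ∀ u v : V, closedNbhd G u ∩ C = closedNbhd G v ∩ C → u = v

/-- `C` is a full-separating set (F-set): both open- and closed-separating. -/
def IsFSet (G : SimpleGraph V) [DecidableRel G.Adj] (C : Finset V) : Prop :=
  IsOSet G C ∧ IsISet G C

/-- `G` has open twins: distinct non-adjacent vertices with equal open neighborhoods. -/
def HasOpenTwins (G : SimpleGraph V) [DecidableRel G.Adj] : Prop :=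
  ∃ u v : V, u ≠ v ∧ ¬ G.Adj u v ∧ G.neighborFinset u = G.neighborFinset v

/-- `G` has closed twins: distinct adjacent vertices with equal closed neighborhoods. -/
def HasClosedTwins (G : SimpleGraph V) [DecidableRel G.Adj] : Prop :=
  ∃ u v : V, u ≠ v ∧ G.Adj u v ∧ closedNbhd G u = closedNbhd G v

/-- `G` has an isolated vertex: a vertex with empty open neighborhood. -/
def HasIsolated (G : SimpleGraph V) [DecidableRel G.Adj] : Prop :=
  ∃ v : V, G.neighborFinset v = ∅

/-- The L-number: minimum cardinality of an L-set. -/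
noncomputable def lNum (G : SimpleGraph V) [DecidableRel G.Adj] : ℕ :=
  sInf {n | ∃ C : Finset V, IsLSet G C ∧ C.card = n}

/-- The O-number: minimum cardinality of an O-set. -/
noncomputable def oNum (G : SimpleGraph V) [DecidableRel G.Adj] : ℕ :=
  sInf {n | ∃ C : Finset V, IsOSet G C ∧ C.card = n}

/-- The I-number: minimum cardinality of an I-set. -/
noncomputable def iNum (G : SimpleGraph V) [DecidableRel G.Adj] : ℕ :=
  sInf {n | ∃ C : Finset V, IsISet G C ∧ C.card = n}

/-- The F-number: minimum cardinality of an F-set. -/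
noncomputable def fNum (G : SimpleGraph V) [DecidableRel G.Adj] : ℕ :=
  sInf {n | ∃ C : Finset V, IsFSet G C ∧ C.card = n}

/-- The LD-number: minimum cardinality of an LD-code. -/
noncomputable def ldNum (G : SimpleGraph V) [DecidableRel G.Adj] : ℕ :=
  sInf {n | ∃ C : Finset V, IsDomSet G C ∧ IsLSet G C ∧ C.card = n}

/-- The OD-number: minimum cardinality of an OD-code. -/
noncomputable def odNum (G : SimpleGraph V) [DecidableRel G.Adj] : ℕ :=
  sInf {n | ∃ C : Finset V, IsDomSet G C ∧ IsOSet G C ∧ C.card = n}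

/-- The ID-number: minimum cardinality of an ID-code. -/
noncomputable def idNum (G : SimpleGraph V) [DecidableRel G.Adj] : ℕ :=
  sInf {n | ∃ C : Finset V, IsDomSet G C ∧ IsISet G C ∧ C.card = n}

/-- The FD-number: minimum cardinality of an FD-code. -/
noncomputable def fdNum (G : SimpleGraph V) [DecidableRel G.Adj] : ℕ :=
  sInf {n | ∃ C : Finset V, IsDomSet G C ∧ IsFSet G C ∧ C.card = n}

/-- The LTD-number: minimum cardinality of an LTD-code. -/
noncomputable def ltdNum (G : SimpleGraph V) [DecidableRel G.Adj] : ℕ :=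
  sInf {n | ∃ C : Finset V, IsTotalDomSet G C ∧ IsLSet G C ∧ C.card = n}

/-- The OTD-number: minimum cardinality of an OTD-code. -/
noncomputable def otdNum (G : SimpleGraph V) [DecidableRel G.Adj] : ℕ :=
  sInf {n | ∃ C : Finset V, IsTotalDomSet G C ∧ IsOSet G C ∧ C.card = n}

/-- The ITD-number: minimum cardinality of an ITD-code. -/
noncomputable def itdNum (G : SimpleGraph V) [DecidableRel G.Adj] : ℕ :=
  sInf {n | ∃ C : Finset V, IsTotalDomSet G C ∧ IsISet G C ∧ C.card = n}

/-- The FTD-number: minimum cardinality of an FTD-code. -/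
noncomputable def ftdNum (G : SimpleGraph V) [DecidableRel G.Adj] : ℕ :=
  sInf {n | ∃ C : Finset V, IsTotalDomSet G C ∧ IsFSet G C ∧ C.card = n}

end SepDom

namespace SepDom

variable {V : Type*} [Fintype V] {G : SimpleGraph V} [DecidableRel G.Adj]

theorem neighborFinset_nonempty_of_not_hasIsolated (hIso : ¬ HasIsolated G) (v : V) :
    (G.neighborFinset v).Nonempty :=
  nonempty_iff_ne_empty.2 fun h => hIso ⟨v, h⟩

variable [DecidableEq V]

theorem isOSet_univ_of_not_hasOpenTwins (hOT : ¬ HasOpenTwins G) : IsOSet G univ := by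
  intro u v h
  rw [inter_univ, inter_univ] at h
  by_contra hne
  by_cases hadj : G.Adj u v
  · have hv : v ∈ G.neighborFinset v := h ▸ (G.mem_neighborFinset u v).2 hadj
    exact G.irrefl ((G.mem_neighborFinset v v).1 hv)
  · exact hOT ⟨u, v, hne, hadj, h⟩

theorem isTotalDomSet_univ_of_not_hasIsolated (hIso : ¬ HasIsolated G) :
    IsTotalDomSet G univ := fun v => by
  rw [inter_univ]
  exact neighborFinset_nonempty_of_not_hasIsolated hIso v

theorem IsOSet.mono {C D : Finset V} (hC : IsOSet G C) (hCD : C ⊆ D) : IsOSet G D := by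
  intro u v h
  apply hC u v
  rw [← inter_eq_right.2 hCD, ← inter_assoc, ← inter_assoc, h]

theorem IsOSet.eq_of_inter_eq_empty {C : Finset V} (hC : IsOSet G C) {u v : V}
    (hu : G.neighborFinset u ∩ C = ∅) (hv : G.neighborFinset v ∩ C = ∅) : u = v :=
  hC u v (hu.trans hv.symm)

theorem IsOSet.exists_isTotalDomSet_superset {C : Finset V} (hC : IsOSet G C)
    (hIso : ¬ HasIsolated G) : ∃ D, C ⊆ D ∧ #D ≤ #C + 1 ∧ IsTotalDomSet G D := by
  by_cases hT : IsTotalDomSet G C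
  · exact ⟨C, subset_rfl, by omega, hT⟩
  obtain ⟨v₀, hv₀⟩ : ∃ v₀, G.neighborFinset v₀ ∩ C = ∅ := by
    simpa [IsTotalDomSet, not_nonempty_iff_eq_empty] using hT
  obtain ⟨w, hw⟩ := neighborFinset_nonempty_of_not_hasIsolated hIso v₀
  refine ⟨insert w C, subset_insert w C, card_insert_le w C, fun v => ?_⟩
  by_cases hv : (G.neighborFinset v ∩ C).Nonempty
  · exact hv.mono (inter_subset_inter_left (subset_insert w C))
  · obtain rfl := hC.eq_of_inter_eq_empty (not_nonempty_iff_eq_empty.1 hv) hv₀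
    exact ⟨w, mem_inter.2 ⟨hw, mem_insert_self w C⟩⟩

theorem exists_isOSet_card_eq_oNum (h : ∃ C : Finset V, IsOSet G C) :
    ∃ C : Finset V, IsOSet G C ∧ #C = oNum G :=
  let ⟨C, hC⟩ := h
  Nat.sInf_mem (s := {n | ∃ C : Finset V, IsOSet G C ∧ #C = n}) ⟨_, C, hC, rfl⟩

theorem otdNum_le_card {C : Finset V} (hT : IsTotalDomSet G C) (hO : IsOSet G C) :
    otdNum G ≤ #C :=
  Nat.sInf_le ⟨C, hT, hO, rfl⟩

end SepDom

open SepDom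

theorem otd_le_o_add_one {V : Type*} [Fintype V] [DecidableEq V]
    (G : SimpleGraph V) [DecidableRel G.Adj]
    (hIso : ¬ HasIsolated G) (hOT : ¬ HasOpenTwins G) :
    (∃ C : Finset V, IsTotalDomSet G C ∧ IsOSet G C) ∧ otdNum G ≤ oNum G + 1 := by
  have hOuniv := isOSet_univ_of_not_hasOpenTwins hOT
  refine ⟨⟨univ, isTotalDomSet_univ_of_not_hasIsolated hIso, hOuniv⟩, ?_⟩
  obtain ⟨C, hC, hCcard⟩ := exists_isOSet_card_eq_oNum ⟨univ, hOuniv⟩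
  obtain ⟨D, hCD, hDcard, hD⟩ := hC.exists_isTotalDomSet_superset hIso
  calc otdNum G ≤ #D := otdNum_le_card hD (hC.mono hCD)
    _ ≤ oNum G + 1 := hCcard ▸ hDcard
end

section
/- For every finite simple graph G without open twins and without closed twins, the FD-numbers of G and of its complement Ḡ differ by at most one (γ^FD(Ḡ) ≤ γ^FD(G) + 1 and γ^FD(G) ≤ γ^FD(Ḡ) + 1); moreover, if in addition neither G nor Ḡ has an isolated vertex, then the FTD-numbers of G and Ḡ differ by at most one (γ^FTD(Ḡ) ≤ γ^FTD(G) + 1 and γ^FTD(G) ≤ γ^FTD(Ḡ) + 1). -/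
open Finset

open SepDom

/-!
In `Gᶜ` the traces swap roles: `N(v) ∩ C = C \ N_G[v]` and `N[v] ∩ C = C \ N_G(v)`, so every
F-set of `G` is an F-set of `Gᶜ`. A set `C` fails to dominate `u` in `Gᶜ` exactly when
`C ⊆ N_G(u)`, and open separation allows at most one such `u`; adding it to `C` gives an FD-code
of `Gᶜ`. Likewise `C` fails to totally dominate `u` in `Gᶜ` exactly when `C ⊆ N_G[u]`, which
closed separation allows for at most one `u`, repaired by adding any `Gᶜ`-neighbour of `u`.
Without twins the whole vertex set is an F-set, so the minima in question are attained.
-/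

namespace SepDom

variable {V : Type*} [Fintype V] [DecidableEq V] {G : SimpleGraph V} [DecidableRel G.Adj]
  {C D : Finset V} {u v : V}

lemma neighborFinset_compl_inter (v : V) (C : Finset V) :
    Gᶜ.neighborFinset v ∩ C = C \ closedNbhd G v := by
  ext a
  simp only [mem_inter, SimpleGraph.mem_neighborFinset, SimpleGraph.compl_adj, mem_sdiff,
    closedNbhd, mem_insert, not_or]
  grind [SimpleGraph.Adj.symm]

lemma closedNbhd_compl_inter (v : V) (C : Finset V) :
    closedNbhd Gᶜ v ∩ C = C \ G.neighborFinset v := by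
  ext a
  simp only [closedNbhd, mem_inter, mem_insert, SimpleGraph.mem_neighborFinset,
    SimpleGraph.compl_adj, mem_sdiff]
  grind [SimpleGraph.irrefl]

lemma IsISet.compl (h : IsISet G C) : IsOSet Gᶜ C := fun u v huv => by
  rw [neighborFinset_compl_inter, neighborFinset_compl_inter,
    sdiff_eq_sdiff_iff_inter_eq_inter, inter_comm C, inter_comm C] at huv
  exact h u v huv

lemma IsOSet.compl (h : IsOSet G C) : IsISet Gᶜ C := fun u v huv => by
  rw [closedNbhd_compl_inter, closedNbhd_compl_inter,
    sdiff_eq_sdiff_iff_inter_eq_inter, inter_comm C, inter_comm C] at huv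
  exact h u v huv

lemma IsFSet.compl (h : IsFSet G C) : IsFSet Gᶜ C :=
  ⟨h.2.compl, h.1.compl⟩

lemma IsFSet.mono (h : IsFSet G C) (hCD : C ⊆ D) : IsFSet G D := by
  have restrict : ∀ s t : Finset V, s ∩ D = t ∩ D → s ∩ C = t ∩ C := fun s t hst => by
    rw [← inter_eq_right.mpr hCD, ← inter_assoc, hst, inter_assoc]
  exact ⟨fun u v huv => h.1 u v (restrict _ _ huv), fun u v huv => h.2 u v (restrict _ _ huv)⟩

lemma IsOSet.eq_of_subset_neighborFinset (h : IsOSet G C) (hu : C ⊆ G.neighborFinset u)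
    (hv : C ⊆ G.neighborFinset v) : u = v :=
  h u v <| (inter_eq_right.mpr hu).trans (inter_eq_right.mpr hv).symm

lemma IsISet.eq_of_subset_closedNbhd (h : IsISet G C) (hu : C ⊆ closedNbhd G u)
    (hv : C ⊆ closedNbhd G v) : u = v :=
  h u v <| (inter_eq_right.mpr hu).trans (inter_eq_right.mpr hv).symm

lemma isFSet_univ (hOT : ¬ HasOpenTwins G) (hCT : ¬ HasClosedTwins G) : IsFSet G univ := by
  constructor
  · intro u v h
    rw [inter_univ, inter_univ] at h
    by_contra hne
    by_cases hadj : G.Adj u v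
    · have hu : u ∈ G.neighborFinset v := (G.mem_neighborFinset v u).mpr hadj.symm
      rw [← h] at hu
      exact G.irrefl ((G.mem_neighborFinset u u).mp hu)
    · exact hOT ⟨u, v, hne, hadj, h⟩
  · intro u v h
    rw [inter_univ, inter_univ] at h
    by_contra hne
    by_cases hadj : G.Adj u v
    · exact hCT ⟨u, v, hne, hadj, h⟩
    · have hv : v ∈ closedNbhd G u := h ▸ mem_insert_self v _
      simp only [closedNbhd, mem_insert, SimpleGraph.mem_neighborFinset] at hv
      exact hv.elim (fun h => hne h.symm) hadj

lemma isDomSet_univ : IsDomSet G univ := fun v => ⟨v, by simp [closedNbhd]⟩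

lemma isTotalDomSet_univ (hG : ¬ HasIsolated G) : IsTotalDomSet G univ := fun v => by
  rw [inter_univ, nonempty_iff_ne_empty]
  exact fun hv => hG ⟨v, hv⟩

lemma IsOSet.exists_isDomSet_compl (h : IsOSet G C) :
    ∃ D, C ⊆ D ∧ #D ≤ #C + 1 ∧ IsDomSet Gᶜ D := by
  by_cases hC : IsDomSet Gᶜ C
  · exact ⟨C, subset_rfl, by omega, hC⟩
  simp only [IsDomSet, not_forall, not_nonempty_iff_eq_empty] at hC
  obtain ⟨w, hw⟩ := hC
  have missed : ∀ u, closedNbhd Gᶜ u ∩ C = ∅ → C ⊆ G.neighborFinset u := fun u hu => by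
    rwa [closedNbhd_compl_inter, sdiff_eq_empty_iff_subset] at hu
  refine ⟨insert w C, subset_insert w C, card_insert_le w C, fun u => ?_⟩
  rcases (closedNbhd Gᶜ u ∩ C).eq_empty_or_nonempty with hu | hu
  · obtain rfl := h.eq_of_subset_neighborFinset (missed u hu) (missed w hw)
    exact ⟨u, mem_inter.mpr ⟨mem_insert_self u _, mem_insert_self u C⟩⟩
  · exact hu.mono (inter_subset_inter_left (subset_insert w C))

lemma IsISet.exists_isTotalDomSet_compl (h : IsISet G C) (hGc : ¬ HasIsolated Gᶜ) :
    ∃ D, C ⊆ D ∧ #D ≤ #C + 1 ∧ IsTotalDomSet Gᶜ D := by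
  by_cases hC : IsTotalDomSet Gᶜ C
  · exact ⟨C, subset_rfl, by omega, hC⟩
  simp only [IsTotalDomSet, not_forall, not_nonempty_iff_eq_empty] at hC
  obtain ⟨w, hw⟩ := hC
  have missed : ∀ u, Gᶜ.neighborFinset u ∩ C = ∅ → C ⊆ closedNbhd G u := fun u hu => by
    rwa [neighborFinset_compl_inter, sdiff_eq_empty_iff_subset] at hu
  obtain ⟨x, hx⟩ := nonempty_iff_ne_empty.mpr fun hw' => hGc ⟨w, hw'⟩
  refine ⟨insert x C, subset_insert x C, card_insert_le x C, fun u => ?_⟩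
  rcases (Gᶜ.neighborFinset u ∩ C).eq_empty_or_nonempty with hu | hu
  · obtain rfl := h.eq_of_subset_closedNbhd (missed u hu) (missed w hw)
    exact ⟨x, mem_inter.mpr ⟨hx, mem_insert_self x C⟩⟩
  · exact hu.mono (inter_subset_inter_left (subset_insert x C))

lemma fdNum_compl_le (hG : ∃ C, IsDomSet G C ∧ IsFSet G C) : fdNum Gᶜ ≤ fdNum G + 1 := by
  obtain ⟨C, -, hF, hC⟩ : fdNum G ∈ {n | ∃ C : Finset V, IsDomSet G C ∧ IsFSet G C ∧ #C = n} :=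
    Nat.sInf_mem (hG.elim fun C hC => ⟨#C, C, hC.1, hC.2, rfl⟩)
  obtain ⟨D, hCD, hD, hDom⟩ := hF.1.exists_isDomSet_compl
  calc fdNum Gᶜ ≤ #D := Nat.sInf_le ⟨D, hDom, hF.compl.mono hCD, rfl⟩
    _ ≤ fdNum G + 1 := hC ▸ hD

lemma ftdNum_compl_le (hG : ∃ C, IsTotalDomSet G C ∧ IsFSet G C) (hGc : ¬ HasIsolated Gᶜ) :
    ftdNum Gᶜ ≤ ftdNum G + 1 := by
  obtain ⟨C, -, hF, hC⟩ :
      ftdNum G ∈ {n | ∃ C : Finset V, IsTotalDomSet G C ∧ IsFSet G C ∧ #C = n} :=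
    Nat.sInf_mem (hG.elim fun C hC => ⟨#C, C, hC.1, hC.2, rfl⟩)
  obtain ⟨D, hCD, hD, hDom⟩ := hF.2.exists_isTotalDomSet_compl hGc
  calc ftdNum Gᶜ ≤ #D := Nat.sInf_le ⟨D, hDom, hF.compl.mono hCD, rfl⟩
    _ ≤ ftdNum G + 1 := hC ▸ hD

end SepDom

theorem fd_ftd_compl_diff_le_one {V : Type*} [Fintype V] [DecidableEq V]
    (G : SimpleGraph V) [DecidableRel G.Adj]
    (hOT : ¬ HasOpenTwins G) (hCT : ¬ HasClosedTwins G) :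
    (fdNum Gᶜ ≤ fdNum G + 1 ∧ fdNum G ≤ fdNum Gᶜ + 1) ∧
      ((¬ HasIsolated G ∧ ¬ HasIsolated Gᶜ) →
        (ftdNum Gᶜ ≤ ftdNum G + 1 ∧ ftdNum G ≤ ftdNum Gᶜ + 1)) := by
  have hF : IsFSet G univ := isFSet_univ hOT hCT
  have hFc : IsFSet Gᶜ univ := hF.compl
  -- `Gᶜᶜ` carries a different `DecidableRel` instance, so `compl_compl` is applied via `convert`.
  refine ⟨⟨fdNum_compl_le ⟨univ, isDomSet_univ, hF⟩, ?_⟩, fun ⟨hG, hGc⟩ => ⟨?_, ?_⟩⟩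
  · convert fdNum_compl_le ⟨univ, isDomSet_univ, hFc⟩ using 2
    exact (compl_compl G).symm
  · exact ftdNum_compl_le ⟨univ, isTotalDomSet_univ hG, hF⟩ hGc
  · convert ftdNum_compl_le ⟨univ, isTotalDomSet_univ hGc, hFc⟩ ?_ using 2
    · exact (compl_compl G).symm
    · convert hG
      exact compl_compl G
end
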